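/- arXiv:1510.06736 — 3 statements merged into one kernel-verified Lean document; each statement's English description precedes it below -/
import Mathlib

section
/- Let g ≥ 1 and let π be a group generated by 2g elements α₁,…,α_g,β₁,…,β_g such that the abelianization of π is a free abelian group of rank 2g, and such that the element ∏_{j=1}^g [α_j,β_j] lies in the center of π. Then the second group homology H₂(π;ℚ) with trivial rational coefficients is nonzero. -/
/-!
STATEMENT 3: Let `g ≥ 1` and let `π` be a group generated by `2g` elements
`α₁,…,α_g,β₁,…,β_g` such that the abelianization of `π` is free abelian of rank
`2g`, and such that `∏ⱼ [αⱼ,βⱼ]` lies in the center of `π`.  Then the second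
group homology `H₂(π;ℚ)` with trivial rational coefficients is nonzero.

Since this version of Mathlib does not contain group homology, we define
`H₂(G;ℚ)` (trivial coefficients) directly as the homology in degree 2 of the
standard inhomogeneous bar complex
`⋯ → ℚ[G³] →d₃ ℚ[G²] →d₂ ℚ[G] → ⋯`, where
`d₂(g₁,g₂) = (g₂) - (g₁g₂) + (g₁)` and
`d₃(g₁,g₂,g₃) = (g₂,g₃) - (g₁g₂,g₃) + (g₁,g₂g₃) - (g₁,g₂)`.
-/

/-- The bar-complex differential `d₂ : ℚ[G²] → ℚ[G]` for trivial coefficients. -/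
noncomputable def barD2 (G : Type) [Group G] : ((G × G) →₀ ℚ) →ₗ[ℚ] (G →₀ ℚ) :=
  Finsupp.linearCombination ℚ fun p : G × G =>
    Finsupp.single p.2 (1 : ℚ) - Finsupp.single (p.1 * p.2) 1 + Finsupp.single p.1 1

/-- The bar-complex differential `d₃ : ℚ[G³] → ℚ[G²]` for trivial coefficients. -/
noncomputable def barD3 (G : Type) [Group G] : ((G × G × G) →₀ ℚ) →ₗ[ℚ] ((G × G) →₀ ℚ) :=
  Finsupp.linearCombination ℚ fun t : G × G × G =>
    Finsupp.single (t.2.1, t.2.2) (1 : ℚ) - Finsupp.single (t.1 * t.2.1, t.2.2) 1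
      + Finsupp.single (t.1, t.2.1 * t.2.2) 1 - Finsupp.single (t.1, t.2.1) 1

/-- The second group homology `H₂(G;ℚ)` of `G` with trivial coefficients in `ℚ`,
defined as `ker d₂ / im d₃` in the bar complex. -/
noncomputable def groupHomology2Q (G : Type) [Group G] : Type :=
  LinearMap.ker (barD2 G) ⧸
    (LinearMap.range (barD3 G)).comap (LinearMap.ker (barD2 G)).subtype

noncomputable instance (G : Type) [Group G] : AddCommGroup (groupHomology2Q G) := by
  unfold groupHomology2Q; infer_instance

noncomputable instance (G : Type) [Group G] : Module ℚ (groupHomology2Q G) := by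
  unfold groupHomology2Q; infer_instance

open scoped commutatorElement

/-!
If `H₂(π;ℚ) = 0`, then `H²(π;ℚ) = 0`, so every rational 2-cocycle is a coboundary. Since the
classes of the `αⱼ, βⱼ` form a basis of `H¹(π;ℚ)`, there are homomorphisms `u, v : π → ℚ` dual to
`α₁` and `β₁`. Choose `ψ, ψ'` with `δψ = u ⌣ v` and `δψ' = v ⌣ u`; then `ψ ⌣ u + u ⌣ ψ'` is a
cocycle (it defines the Massey product `⟨u, v, u⟩`), hence a coboundary `δχ`. Evaluating `δχ` on
the commuting pair `(α₁, r)`, where `r = ∏ⱼ [αⱼ, βⱼ]` is central, forces `ψ r = ψ' r`, whereas a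
direct computation gives `ψ r = -1` and `ψ' r = 1`.
-/

section BarComplex

variable {G : Type} [Group G]

def IsTwoCocycle (f : G → G → ℚ) : Prop :=
  ∀ a b c : G, f b c - f (a * b) c + f a (b * c) - f a b = 0

def IsTwoCoboundary (f : G → G → ℚ) : Prop :=
  ∃ ψ : G → ℚ, ∀ a b : G, f a b = ψ b - ψ (a * b) + ψ a

lemma barD2_single_one (a b : G) :
    barD2 G (Finsupp.single (a, b) 1) =
      Finsupp.single b 1 - Finsupp.single (a * b) 1 + Finsupp.single a 1 := by
  simp [barD2]

lemma barD3_single (a b c : G) (s : ℚ) :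
    barD3 G (Finsupp.single (a, b, c) s) =
      s • (Finsupp.single (b, c) 1 - Finsupp.single (a * b, c) 1
        + Finsupp.single (a, b * c) 1 - Finsupp.single (a, b) 1) := by
  simp [barD3]

lemma ker_barD2_le_range_barD3 [Subsingleton (groupHomology2Q G)] :
    LinearMap.ker (barD2 G) ≤ LinearMap.range (barD3 G) := by
  have hquot : Subsingleton (LinearMap.ker (barD2 G) ⧸
      (LinearMap.range (barD3 G)).comap (LinearMap.ker (barD2 G)).subtype) :=
    ‹Subsingleton (groupHomology2Q G)›
  intro x hx
  have hmem : (⟨x, hx⟩ : LinearMap.ker (barD2 G)) ∈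
      (LinearMap.range (barD3 G)).comap (LinearMap.ker (barD2 G)).subtype :=
    Submodule.Quotient.subsingleton_iff.mp hquot ▸ Submodule.mem_top
  simpa using hmem

noncomputable def cochainFunctional (f : G → G → ℚ) : Module.Dual ℚ ((G × G) →₀ ℚ) :=
  Finsupp.linearCombination ℚ fun p : G × G => f p.1 p.2

lemma IsTwoCocycle.cochainFunctional_comp_barD3 {f : G → G → ℚ} (hf : IsTwoCocycle f) :
    cochainFunctional f ∘ₗ barD3 G = 0 := by
  refine Finsupp.lhom_ext fun ⟨a, b, c⟩ s => ?_
  simp only [LinearMap.comp_apply, barD3_single, map_smul, map_sub, map_add, cochainFunctional,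
    Finsupp.linearCombination_single, smul_eq_mul, LinearMap.zero_apply]
  linear_combination s * hf a b c

/-- A cocycle kills `ker d₂ ⊆ im d₃`, so it factors through `d₂`. -/
lemma IsTwoCocycle.isTwoCoboundary
    (hH : LinearMap.ker (barD2 G) ≤ LinearMap.range (barD3 G))
    {f : G → G → ℚ} (hf : IsTwoCocycle f) : IsTwoCoboundary f := by
  have hann : cochainFunctional f ∈ (LinearMap.ker (barD2 G)).dualAnnihilator := by
    rw [Submodule.mem_dualAnnihilator]
    intro x hx
    obtain ⟨y, rfl⟩ := hH hx
    exact LinearMap.congr_fun hf.cochainFunctional_comp_barD3 y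
  rw [← LinearMap.range_dualMap_eq_dualAnnihilator_ker] at hann
  obtain ⟨φ, hφ⟩ := hann
  refine ⟨fun a => φ (Finsupp.single a 1), fun a b => ?_⟩
  have hab := LinearMap.congr_fun hφ (Finsupp.single (a, b) 1)
  simp only [LinearMap.dualMap_apply, barD2_single_one, map_add, map_sub, cochainFunctional,
    Finsupp.linearCombination_single, one_smul] at hab
  exact hab.symm

end BarComplex

section MulToAddHom

variable {G : Type} [Group G] {V : Type*}

def IsMulToAddHom [Add V] (T : G → V) : Prop :=
  ∀ x y : G, T (x * y) = T x + T y

namespace IsMulToAddHom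

section AddGroup

variable [AddGroup V] {T : G → V}

protected lemma map_mul (hT : IsMulToAddHom T) (x y : G) : T (x * y) = T x + T y := hT x y

lemma map_one (hT : IsMulToAddHom T) : T 1 = 0 := by
  simpa using (hT 1 1).symm

lemma map_inv (hT : IsMulToAddHom T) (x : G) : T x⁻¹ = -T x := by
  rw [eq_neg_iff_add_eq_zero, ← hT, inv_mul_cancel, hT.map_one]

lemma map_list_prod (hT : IsMulToAddHom T) (l : List G) : T l.prod = (l.map T).sum := by
  induction l with
  | nil => simpa using hT.map_one
  | cons x t ih => simp [hT.map_mul, ih]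

end AddGroup

variable [AddCommGroup V] {T : G → V}

lemma map_commutatorElement (hT : IsMulToAddHom T) (a b : G) : T ⁅a, b⁆ = 0 := by
  rw [commutatorElement_def, hT.map_mul, hT.map_mul, hT.map_mul, hT.map_inv, hT.map_inv]
  abel

lemma map_prod_commutators (hT : IsMulToAddHom T) {g : ℕ} (α β : Fin g → G) :
    T (List.ofFn fun j => ⁅α j, β j⁆).prod = 0 := by
  simp [hT.map_list_prod, Function.comp_def, hT.map_commutatorElement]

lemma mem_span_image [Module ℚ V] (hT : IsMulToAddHom T) {S : Set G}
    (hS : Subgroup.closure S = ⊤) (x : G) : T x ∈ Submodule.span ℚ (T '' S) := by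
  induction (hS ▸ Subgroup.mem_top x : x ∈ Subgroup.closure S) using Subgroup.closure_induction with
  | mem x hx => exact Submodule.subset_span ⟨x, hx, rfl⟩
  | one => simp [hT.map_one]
  | mul x y _ _ hx hy => simpa [hT.map_mul] using Submodule.add_mem _ hx hy
  | inv x _ hx => simpa [hT.map_inv x] using Submodule.neg_mem _ hx

end IsMulToAddHom

end MulToAddHom

lemma exists_isMulToAddHom_dual {G : Type} [Group G] {ι : Type*} [Fintype ι] [DecidableEq ι]
    {n : ℕ} (hι : Fintype.card ι = n) (E : ι → G) (hE : Subgroup.closure (Set.range E) = ⊤)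
    (e : Abelianization G ≃* Multiplicative (Fin n → ℤ)) (i : ι) :
    ∃ u : G → ℚ, IsMulToAddHom u ∧ ∀ j, u (E j) = if j = i then 1 else 0 := by
  let T : G → Fin n → ℚ := fun x k => ((e (Abelianization.of x)).toAdd k : ℚ)
  have hT : IsMulToAddHom T := fun x y => by
    funext k
    simp [T]
  have hspan : ⊤ ≤ Submodule.span ℚ (Set.range (T ∘ E)) := by
    rw [← (Pi.basisFun ℚ (Fin n)).span_eq, Submodule.span_le]
    rintro _ ⟨k, rfl⟩
    obtain ⟨x, hx⟩ := (e.surjective.comp QuotientGroup.mk_surjective)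
      (Multiplicative.ofAdd (Pi.single k 1))
    replace hx : e (Abelianization.of x) = Multiplicative.ofAdd (Pi.single k 1) := hx
    have hTx : T x = Pi.basisFun ℚ (Fin n) k := by
      funext l
      simp [T, hx, Pi.single_apply]
    rw [← hTx, Set.range_comp]
    exact hT.mem_span_image hE x
  have hcard : Fintype.card ι = Module.finrank ℚ (Fin n → ℚ) := by simp [hι]
  let B := basisOfTopLeSpanOfCardEqFinrank (T ∘ E) hspan hcard
  refine ⟨fun x => B.coord i (T x), fun x y => by simp [hT.map_mul], fun j => ?_⟩
  have hB : B j = T (E j) := congrFun (coe_basisOfTopLeSpanOfCardEqFinrank _ hspan hcard) j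
  simp [← hB, Module.Basis.coord_apply, Finsupp.single_apply]

section CupProduct

variable {G : Type} [Group G] {u v ψ : G → ℚ}

lemma isTwoCocycle_cup (hu : IsMulToAddHom u) (hv : IsMulToAddHom v) :
    IsTwoCocycle fun a b => u a * v b := fun a b c => by
  simp only [hu.map_mul, hv.map_mul]
  ring

/-- `δψ = u ⌣ v`. -/
def IsCupPrimitive (u v ψ : G → ℚ) : Prop :=
  ∀ a b : G, u a * v b = ψ b - ψ (a * b) + ψ a

namespace IsCupPrimitive

lemma map_mul (hψ : IsCupPrimitive u v ψ) (a b : G) : ψ (a * b) = ψ a + ψ b - u a * v b := by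
  linarith [hψ a b]

lemma map_one (hu : IsMulToAddHom u) (hψ : IsCupPrimitive u v ψ) : ψ 1 = 0 := by
  have h := hψ 1 1
  rw [hu.map_one, one_mul] at h
  linarith

lemma map_inv (hu : IsMulToAddHom u) (hv : IsMulToAddHom v) (hψ : IsCupPrimitive u v ψ)
    (x : G) : ψ x⁻¹ = -ψ x - u x * v x := by
  have h := hψ.map_mul x x⁻¹
  rw [mul_inv_cancel, hψ.map_one hu, hv.map_inv] at h
  linarith

lemma map_commutatorElement (hu : IsMulToAddHom u) (hv : IsMulToAddHom v)
    (hψ : IsCupPrimitive u v ψ) (a b : G) : ψ ⁅a, b⁆ = u b * v a - u a * v b := by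
  rw [commutatorElement_def, hψ.map_mul, hψ.map_mul, hψ.map_mul, hψ.map_inv hu hv,
    hψ.map_inv hu hv]
  simp only [hu.map_mul, hu.map_inv, hv.map_inv]
  ring

lemma map_list_prod (hu : IsMulToAddHom u) (hψ : IsCupPrimitive u v ψ) (l : List G)
    (hl : ∀ x ∈ l, u x = 0) : ψ l.prod = (l.map ψ).sum := by
  induction l with
  | nil => simpa using hψ.map_one hu
  | cons x t ih =>
    rw [List.forall_mem_cons] at hl
    simp [hψ.map_mul, ih hl.2, hl.1]

lemma map_prod_commutators (hu : IsMulToAddHom u) (hv : IsMulToAddHom v)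
    (hψ : IsCupPrimitive u v ψ) {g : ℕ} (α β : Fin g → G) :
    ψ (List.ofFn fun j => ⁅α j, β j⁆).prod = ∑ j, (u (β j) * v (α j) - u (α j) * v (β j)) := by
  rw [hψ.map_list_prod hu _ (by simp [hu.map_commutatorElement]), List.map_ofFn, List.sum_ofFn]
  simp only [Function.comp_apply, hψ.map_commutatorElement hu hv]

end IsCupPrimitive

lemma exists_isCupPrimitive (hH : ∀ f : G → G → ℚ, IsTwoCocycle f → IsTwoCoboundary f)
    (hu : IsMulToAddHom u) (hv : IsMulToAddHom v) : ∃ ψ, IsCupPrimitive u v ψ :=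
  hH _ (isTwoCocycle_cup hu hv)

lemma isTwoCocycle_massey {ψ' : G → ℚ} (hu : IsMulToAddHom u) (hψ : IsCupPrimitive u v ψ)
    (hψ' : IsCupPrimitive v u ψ') : IsTwoCocycle fun a b => ψ a * u b + u a * ψ' b :=
  fun a b c => by
    linear_combination (-u c) * hψ a b + u a * hψ' b c + (-ψ' c) * hu.map_mul a b
      + ψ a * hu.map_mul b c

/-- `ψ ⌣ u + u ⌣ ψ'` has a primitive `χ`, and `δχ (r, a) = δχ (a, r)` when `a` and `r` commute. -/
lemma IsCupPrimitive.mul_eq_mul_of_commute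
    (hH : ∀ f : G → G → ℚ, IsTwoCocycle f → IsTwoCoboundary f) {ψ' : G → ℚ}
    (hu : IsMulToAddHom u) (hψ : IsCupPrimitive u v ψ) (hψ' : IsCupPrimitive v u ψ')
    {a r : G} (har : Commute a r) (hr : u r = 0) : ψ r * u a = u a * ψ' r := by
  obtain ⟨χ, hχ⟩ := hH _ (isTwoCocycle_massey hu hψ hψ')
  have hra := hχ r a
  have har' := hχ a r
  simp only [hr, har.eq, zero_mul, add_zero, mul_zero] at hra har'
  linarith

end CupProduct

theorem H2_nonzero_of_surface_like_group (g : ℕ) (hg : 1 ≤ g)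
    (π : Type) [Group π] (α β : Fin g → π)
    (hgen : Subgroup.closure (Set.range α ∪ Set.range β) = ⊤)
    (hab : Nonempty (Abelianization π ≃* Multiplicative (Fin (2 * g) → ℤ)))
    (hcentral : (List.ofFn fun j : Fin g => ⁅α j, β j⁆).prod ∈ Subgroup.center π) :
    Nontrivial (groupHomology2Q π) := by
  rw [← not_subsingleton_iff_nontrivial]
  intro hH₂
  have hH : ∀ f : π → π → ℚ, IsTwoCocycle f → IsTwoCoboundary f :=
    fun f hf => hf.isTwoCoboundary ker_barD2_le_range_barD3
  obtain ⟨e⟩ := hab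
  have hE : Subgroup.closure (Set.range (Sum.elim α β)) = ⊤ := by rwa [Set.Sum.elim_range]
  have hcard : Fintype.card (Fin g ⊕ Fin g) = 2 * g := by simp [two_mul]
  let i₀ : Fin g := ⟨0, hg⟩
  obtain ⟨u, hu, huE⟩ := exists_isMulToAddHom_dual hcard _ hE e (.inl i₀)
  obtain ⟨v, hv, hvE⟩ := exists_isMulToAddHom_dual hcard _ hE e (.inr i₀)
  obtain ⟨huα, huβ⟩ : (∀ j, u (α j) = if j = i₀ then 1 else 0) ∧ ∀ j, u (β j) = 0 := by
    simpa [Sum.forall] using huE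
  obtain ⟨hvα, hvβ⟩ : (∀ j, v (α j) = 0) ∧ ∀ j, v (β j) = if j = i₀ then 1 else 0 := by
    simpa [Sum.forall] using hvE
  obtain ⟨ψ, hψ⟩ := exists_isCupPrimitive hH hu hv
  obtain ⟨ψ', hψ'⟩ := exists_isCupPrimitive hH hv hu
  have hψr : ψ (List.ofFn fun j => ⁅α j, β j⁆).prod = -1 := by
    simp [hψ.map_prod_commutators hu hv, huα, huβ, hvα, hvβ]
  have hψ'r : ψ' (List.ofFn fun j => ⁅α j, β j⁆).prod = 1 := by
    simp [hψ'.map_prod_commutators hv hu, huα, huβ, hvα, hvβ]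
  have key := hψ.mul_eq_mul_of_commute hH hu hψ' (Subgroup.mem_center_iff.mp hcentral (α i₀))
    (hu.map_prod_commutators α β)
  rw [hψr, hψ'r, huα, if_pos rfl] at key
  norm_num at key
end

section
/- Let g ≥ 2 and let A be an abelian group. Suppose there is an exact sequence of abelian groups 0 → ℤ^{2g} →ⁱ ℤ × A →ʲ ℤ^{22} →^δ ℤ^{2g} × ℤ/(2g−2)ℤ →^q ℤ^{2g} → 0. Then A is a free abelian group of rank 21 + 2g, and the image of j is a subgroup of index 2g−2 in ℤ^{22}. -/
/-!
Since `ℤ/(2g−2)` is torsion and `ℤ^{2g}` is torsion-free, `q` kills `0 × ℤ/(2g−2)` and so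
factors through a surjective endomorphism of `ℤ^{2g}`; such an endomorphism of a finitely
generated module is injective, hence `ker q = 0 × ℤ/(2g−2)`. Exactness identifies
`ℤ²²/im j` with `im δ = ker q`, which has order `2g−2`. In particular `im j` has finite index,
hence rank `22`, and `ℤ × A` is a finitely generated torsion-free extension of `im j` by
`ℤ^{2g}`, so it is free of rank `22 + 2g`.
-/

open Function Module

theorem AddMonoidHom.ker_eq_range_inr_of_surjective {M T : Type*} [AddCommGroup M]
    [AddCommGroup T] [Module.Finite ℤ M] [IsAddTorsionFree M] (hT : IsAddTorsion T)
    {q : M × T →+ M} (hq : Function.Surjective q) : q.ker = (AddMonoidHom.inr M T).range := by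
  have hq_snd (t : T) : q (0, t) = 0 :=
    ((q.comp (AddMonoidHom.inr M T)).isOfFinAddOrder (hT t)).eq_zero'
  have hq_fst (x : M × T) : q x = q (x.1, 0) := by
    conv_lhs => rw [← Prod.fst_add_snd x, map_add, hq_snd, add_zero]
  let F : M →ₗ[ℤ] M := (q.comp (AddMonoidHom.inl M T)).toIntLinearMap
  have hF : Function.Surjective F := fun m ↦
    let ⟨x, hx⟩ := hq m
    ⟨x.1, (hq_fst x).symm.trans hx⟩
  have hF_inj := OrzechProperty.injective_of_surjective_endomorphism F hF
  ext ⟨m, t⟩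
  rw [mem_ker, hq_fst]
  simpa [eq_comm, F] using (injective_iff_map_eq_zero' F).1 hF_inj m

theorem AddMonoidHom.index_range_eq_card_ker {M N P Q : Type*} [AddGroup M] [AddGroup N]
    [AddGroup P] [AddGroup Q] (j : M →+ N) (δ : N →+ P) (q : P →+ Q) (hjδ : j.range = δ.ker)
    (hδq : δ.range = q.ker) : j.range.index = Nat.card q.ker := by
  rw [hjδ, AddSubgroup.index_ker, hδq]

theorem Module.IsTorsionFree.of_exact {R K M N : Type*} [Ring R] [IsDomain R] [AddCommGroup K]
    [AddCommGroup M] [AddCommGroup N] [Module R K] [Module R M] [Module R N]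
    [IsTorsionFree R K] [IsTorsionFree R N] {f : K →ₗ[R] M} {g : M →ₗ[R] N}
    (hf : Function.Injective f) (hfg : Exact f g) : IsTorsionFree R M := by
  refine .of_smul_eq_zero fun r m hrm ↦ or_iff_not_imp_left.2 fun hr ↦ ?_
  have hgm : g m = 0 := by simpa [hr] using congrArg g hrm
  obtain ⟨k, rfl⟩ := (hfg m).1 hgm
  have hrk : r • k = 0 := hf (by simpa using hrm)
  simp [(smul_eq_zero.1 hrk).resolve_left hr]

theorem Module.finrank_eq_add_finrank_range_of_exact {R K M N : Type*} [CommRing R] [IsDomain R]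
    [AddCommGroup K] [AddCommGroup M] [AddCommGroup N] [Module R K] [Module R M] [Module R N]
    [Module.Finite R M] {f : K →ₗ[R] M} {g : M →ₗ[R] N} (hf : Function.Injective f)
    (hfg : Exact f g) :
    finrank R M = finrank R K + finrank R (LinearMap.range g) := by
  rw [← (LinearMap.ker g).finrank_quotient_add_finrank, g.quotKerEquivRange.finrank_eq,
    hfg.linearMap_ker_eq, LinearMap.finrank_range_of_inj hf, add_comm]

theorem nonempty_addEquiv_pi_int_of_finrank_eq {A : Type*} [AddCommGroup A] [Module.Finite ℤ A]
    [IsAddTorsionFree A] {n : ℕ} (h : finrank ℤ A = n) : Nonempty (A ≃+ (Fin n → ℤ)) :=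
  ⟨(finBasisOfFinrankEq ℤ A h).equivFun.toAddEquiv⟩

theorem cap_homology_computation (g : ℕ) (hg : 2 ≤ g)
    (A : Type) [AddCommGroup A]
    (i : (Fin (2 * g) → ℤ) →+ ℤ × A)
    (j : ℤ × A →+ (Fin 22 → ℤ))
    (δ : (Fin 22 → ℤ) →+ (Fin (2 * g) → ℤ) × ZMod (2 * g - 2))
    (q : ((Fin (2 * g) → ℤ) × ZMod (2 * g - 2)) →+ (Fin (2 * g) → ℤ))
    (hi : Function.Injective i)
    (hij : i.range = j.ker)
    (hjδ : j.range = δ.ker)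
    (hδq : δ.range = q.ker)
    (hq : Function.Surjective q) :
    Nonempty (A ≃+ (Fin (21 + 2 * g) → ℤ)) ∧ j.range.index = 2 * g - 2 := by
  have : NeZero (2 * g - 2) := ⟨by omega⟩
  have hindex : j.range.index = 2 * g - 2 := by
    rw [j.index_range_eq_card_ker δ q hjδ hδq,
      q.ker_eq_range_inr_of_surjective (fun t ↦ isOfFinAddOrder_of_finite t) hq,
      Nat.card_congr (AddMonoidHom.ofInjective (Prod.mk_right_injective 0)).toEquiv.symm,
      Nat.card_zmod]
  refine ⟨?_, hindex⟩
  have : j.range.FiniteIndex := ⟨by rw [hindex]; exact NeZero.ne _⟩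
  have hexact : Exact i.toIntLinearMap j.toIntLinearMap := AddMonoidHom.exact_iff.2 hij.symm
  have : Module.Finite ℤ (ℤ × A) :=
    .of_exact (f := i.toIntLinearMap) (g := j.toIntLinearMap.rangeRestrict)
      (LinearMap.exact_iff.2 (by rw [LinearMap.ker_rangeRestrict, hexact.linearMap_ker_eq]))
      j.toIntLinearMap.surjective_rangeRestrict
  have : IsAddTorsionFree (ℤ × A) :=
    isTorsionFree_int_iff_isAddTorsionFree.1 (.of_exact hi hexact)
  have : IsAddTorsionFree A := (Prod.mk_right_injective 0).isAddTorsionFree (AddMonoidHom.inr ℤ A)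
  have : Module.Finite ℤ A := .of_surjective (LinearMap.snd ℤ ℤ A) Prod.snd_surjective
  have hrange : finrank ℤ (LinearMap.range j.toIntLinearMap) = 22 :=
    j.range.finrank_eq_of_finiteIndex.trans (finrank_fin_fun ℤ)
  have hrank := finrank_eq_add_finrank_range_of_exact hi hexact
  rw [finrank_prod, finrank_self, finrank_fin_fun, hrange] at hrank
  exact nonempty_addEquiv_pi_int_of_finrank_eq (by omega)
end

section
/- Let n ≥ 1, let G and Q be groups, and let p : G → Q be a surjective group homomorphism. Suppose the abelianizations of G and of Q are both free abelian of rank n. Then the abelianization homomorphism ab_G : G → G^{ab} factors through p; that is, there exists a homomorphism f : Q → G^{ab} with f ∘ p = ab_G. -/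
/-!
STATEMENT 9: Let `n ≥ 1`, let `G` and `Q` be groups, and let `p : G → Q` be a
surjective group homomorphism.  Suppose the abelianizations of `G` and of `Q`
are both free abelian of rank `n`.  Then the abelianization homomorphism
`ab_G : G → G^{ab}` factors through `p`; that is, there exists a homomorphism
`f : Q → G^{ab}` with `f ∘ p = ab_G`.
-/

theorem abelianization_factors_through_surjection
    (n : ℕ) (hn : 1 ≤ n) (G Q : Type) [Group G] [Group Q]
    (p : G →* Q) (hp : Function.Surjective p)
    (hG : Nonempty (Abelianization G ≃* Multiplicative (Fin n → ℤ)))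
    (hQ : Nonempty (Abelianization Q ≃* Multiplicative (Fin n → ℤ))) :
    ∃ f : Q →* Abelianization G, f.comp p = Abelianization.of := by
  obtain ⟨e⟩ := hG
  obtain ⟨d⟩ := hQ
  set m : Abelianization G →* Abelianization Q := Abelianization.map p with hm
  have hmof : ∀ g : G, m (Abelianization.of g) = Abelianization.of (p g) := fun g => rfl
  have hmsurj : Function.Surjective m := by
    intro x
    obtain ⟨q, rfl⟩ := Quotient.exists_rep x
    obtain ⟨g, rfl⟩ := hp q
    exact ⟨Abelianization.of g, rfl⟩
  -- transport to an endomorphism of ℤ^n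
  set φ : Multiplicative (Fin n → ℤ) →* Multiplicative (Fin n → ℤ) :=
    d.toMonoidHom.comp (m.comp e.symm.toMonoidHom) with hφ
  have hφsurj : Function.Surjective φ :=
    d.surjective.comp (hmsurj.comp e.symm.surjective)
  set ψ : (Fin n → ℤ) →ₗ[ℤ] (Fin n → ℤ) := (MonoidHom.toAdditive φ).toIntLinearMap with hψ
  have hψsurj : Function.Surjective ψ := hφsurj
  have hψinj : Function.Injective ψ :=
    IsNoetherian.injective_of_surjective_endomorphism ψ hψsurj
  have hφinj : Function.Injective φ := hψinj
  have hminj : Function.Injective m := by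
    intro a b hab
    have : φ (e a) = φ (e b) := by
      simp only [hφ, MonoidHom.comp_apply, MulEquiv.coe_toMonoidHom]
      rw [MulEquiv.symm_apply_apply, MulEquiv.symm_apply_apply, hab]
    exact e.injective (hφinj this)
  set E : Abelianization G ≃* Abelianization Q := MulEquiv.ofBijective m ⟨hminj, hmsurj⟩
  refine ⟨E.symm.toMonoidHom.comp Abelianization.of, ?_⟩
  ext g
  show E.symm (Abelianization.of (p g)) = Abelianization.of g
  rw [← hmof g]
  exact E.symm_apply_apply (Abelianization.of g)
end
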